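/- arXiv:1705.10894 — 3 statements merged into one kernel-verified Lean document; each statement's English description precedes it below -/
import Mathlib

section
/- For all integers n ≥ 1 and k ≥ 1, the identity ∑_{α+β=k} C(n,α)·C(n-1+β, n-1) = ∑_{ℓ} C(n,ℓ)·C(k-1, ℓ-1)·2^ℓ holds. -/
/-!
Both sides are the coefficient of `X^k` in `(1 + X)^n / (1 - X)^n`. The left side is the Cauchy
product of `(1 + X)^n` with `(1 - X)^(-n) = ∑ C(n-1+m, n-1) X^m`. For the right side write
`1 + X = 2X + (1 - X)` and expand binomially: the `ℓ`-th term is `C(n,ℓ) 2^ℓ X^ℓ / (1 - X)^ℓ`,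
whose coefficient of `X^k` is `C(n,ℓ) 2^ℓ C(k-1, ℓ-1)`.
-/

open Finset

namespace PowerSeries

variable {R : Type*} [CommRing R]

theorem coeff_one_add_X_pow (n j : ℕ) : coeff j ((1 + X : R⟦X⟧) ^ n) = n.choose j := by
  rw [← Polynomial.coeff_one_add_X_pow R n j, ← Polynomial.coeff_coe]
  simp

theorem one_add_X_pow_mul_invOneSubPow (n : ℕ) :
    (1 + X : R⟦X⟧) ^ n * (invOneSubPow R n).val =
      ∑ l ∈ range (n + 1), C ((n.choose l : R) * 2 ^ l) * (X ^ l * (invOneSubPow R l).val) := by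
  rw [show (1 + X : R⟦X⟧) = 2 * X + (1 - X) by ring, add_pow, sum_mul]
  refine sum_congr rfl fun l hl => ?_
  obtain ⟨e, rfl⟩ := Nat.exists_eq_add_of_le (Nat.lt_succ_iff.mp (mem_range.mp hl))
  rw [Nat.add_sub_cancel_left,
    ← one_sub_pow_mul_invOneSubPow_val_add_eq_invOneSubPow_val R (d := l) e]
  simp only [map_mul, map_natCast, map_pow, map_ofNat]
  ring

theorem coeff_one_add_X_pow_mul_invOneSubPow {n : ℕ} (hn : 1 ≤ n) (k : ℕ) :
    coeff k ((1 + X : R⟦X⟧) ^ n * (invOneSubPow R n).val) =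
      ∑ α ∈ range (k + 1), (n.choose α * (n - 1 + (k - α)).choose (n - 1) : R) := by
  rw [invOneSubPow_val_eq_mk_sub_one_add_choose_of_pos R n hn, coeff_mul,
    Nat.sum_antidiagonal_eq_sum_range_succ_mk]
  simp only [coeff_one_add_X_pow, coeff_mk]

-- At `k = 0`, `l = 1` the right side would read `C(0 - 1, 0) = 1` (truncated subtraction).
theorem coeff_X_pow_mul_invOneSubPow {k : ℕ} (hk : 1 ≤ k) (l : ℕ) :
    coeff k (X ^ l * (invOneSubPow R l).val) =
      if l = 0 then 0 else ((k - 1).choose (l - 1) : R) := by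
  rw [coeff_X_pow_mul']
  rcases Nat.eq_zero_or_pos l with rfl | hl
  · simp [invOneSubPow_zero, coeff_one, Nat.one_le_iff_ne_zero.mp hk]
  · rw [if_neg hl.ne']
    split_ifs with hlk
    · rw [invOneSubPow_val_eq_mk_sub_one_add_choose_of_pos R l hl, coeff_mk,
        show l - 1 + (k - l) = k - 1 by omega]
    · rw [Nat.choose_eq_zero_of_lt (by omega), Nat.cast_zero]

end PowerSeries

open PowerSeries in
/-- The two dimension counts agree:
∑_{α+β=k} C(n,α)·C(n-1+β,n-1) = ∑_ℓ C(n,ℓ)·C(k-1,ℓ-1)·2^ℓ. -/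
theorem stmt_2 (n k : ℕ) (hn : 1 ≤ n) (hk : 1 ≤ k) :
    ∑ α ∈ Finset.range (k + 1), n.choose α * (n - 1 + (k - α)).choose (n - 1) =
      ∑ ℓ ∈ Finset.range (n + 1),
        if ℓ = 0 then 0 else n.choose ℓ * (k - 1).choose (ℓ - 1) * 2 ^ ℓ := by
  rw [← Nat.cast_inj (R := ℤ)]
  push_cast
  rw [← coeff_one_add_X_pow_mul_invOneSubPow hn, one_add_X_pow_mul_invOneSubPow, map_sum]
  simp only [coeff_C_mul, coeff_X_pow_mul_invOneSubPow hk]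
  refine sum_congr rfl fun ℓ _ => ?_
  split_ifs <;> ring
end

section
/- With c(w,2n) as in the standard recursion (c(0,2n)=1, c(w,2)=4 for w>0, c(w,2n)=4+4·∑_{i=1}^{w-1}c(i,2n-2)+c(w,2n-2)): for every n ≥ 1 and every w > n, ∑_{k=0}^{n} (−1)^k·C(n,k)·c(w−k, 2n+2) = 2^{2n+2}. -/
/-!
Put `cShift n x = c (x + 1) (n + 1)`; the shift makes `cShift 0` the constant `4`
(whereas `c 0 1 = 1`). The recursion gives `Δ (cShift (n + 1)) = 3 • cShift n + cShift n (· + 1)`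
for the forward difference `Δ`, and since `Δ` is linear and commutes with translations,
induction on `n` yields `Δⁿ (cShift n) ≡ 4ⁿ⁺¹`. The alternating binomial sum of the theorem is
`Δⁿ (cShift n)` at `w - 1 - n`, with the summation order reversed.
-/

/-- `c w n` stands for c(w, 2n), the first Betti number of the weight-w
Hamiltonian chain complex on the 2n-torus: c(0,2n)=1, c(w,2)=4 for w>0, and
c(w,2n) = 4 + 4·∑_{i=1}^{w-1} c(i,2n-2) + c(w,2n-2) for n ≥ 2, w > 0. -/
def c : ℕ → ℕ → ℕ
  | 0, _ => 1
  | _ + 1, 0 => 0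
  | _ + 1, 1 => 4
  | w + 1, n + 2 =>
      4 + 4 * (∑ i ∈ Finset.Icc 1 w, c i (n + 1)) + c (w + 1) (n + 1)
termination_by _ n => n

open Finset fwdDiff

theorem sum_range_alternating_choose_eq_fwdDiff_iter {G : Type*} [AddCommGroup G]
    (f : ℕ → G) {n y : ℕ} (hny : n ≤ y) :
    ∑ k ∈ range (n + 1), ((-1 : ℤ) ^ k * n.choose k) • f (y - k) = (Δ_[1])^[n] f (y - n) := by
  rw [fwdDiff_iter_eq_sum_shift, ← sum_range_reflect]
  refine sum_congr rfl fun k hk => ?_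
  have hkn : k ≤ n := Nat.lt_succ_iff.mp (mem_range.mp hk)
  rw [Nat.add_sub_cancel, Nat.choose_symm hkn, smul_eq_mul, mul_one]
  congr 2
  omega

lemma c_succ_one (w : ℕ) : c (w + 1) 1 = 4 := by
  rw [c]

lemma c_add_two_add_two (w n : ℕ) :
    c (w + 2) (n + 2) = c (w + 1) (n + 2) + 3 * c (w + 1) (n + 1) + c (w + 2) (n + 1) := by
  rw [c, c, sum_Icc_succ_top (by omega : 1 ≤ w + 1)]
  ring

def cShift (n x : ℕ) : ℤ := c (x + 1) (n + 1)

lemma fwdDiff_cShift (n : ℕ) :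
    Δ_[1] (cShift (n + 1)) = 3 • cShift n + fun x => cShift n (x + 1) := by
  ext x
  simp only [fwdDiff, cShift, Pi.add_apply, Pi.smul_apply, c_add_two_add_two x n]
  push_cast
  ring

lemma fwdDiff_iter_cShift (n y : ℕ) : (Δ_[1])^[n] (cShift n) y = 4 ^ (n + 1) := by
  induction n generalizing y with
  | zero => simp [cShift, c_succ_one]
  | succ n ih =>
    rw [Function.iterate_succ_apply, fwdDiff_cShift, fwdDiff_iter_add, fwdDiff_iter_const_smul,
      Pi.add_apply, Pi.smul_apply, fwdDiff_iter_comp_add, ih, ih]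
    ring

theorem stmt_8_general (n w : ℕ) (hw : n < w) :
    ∑ k ∈ Finset.range (n + 1),
        (-1 : ℤ) ^ k * n.choose k * c (w - k) (n + 1) = 2 ^ (2 * n + 2) := by
  obtain ⟨y, rfl⟩ : ∃ y, w = y + 1 := ⟨w - 1, by omega⟩
  have hterm : ∀ k ∈ range (n + 1), (-1 : ℤ) ^ k * n.choose k * c (y + 1 - k) (n + 1)
      = ((-1 : ℤ) ^ k * n.choose k) • cShift n (y - k) := by
    intro k hk
    rw [smul_eq_mul, cShift, Nat.sub_add_comm (by grind)]
  rw [sum_congr rfl hterm, sum_range_alternating_choose_eq_fwdDiff_iter _ (by omega),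
    fwdDiff_iter_cShift, show 2 * n + 2 = 2 * (n + 1) by ring, pow_mul]
  norm_num

/-- For every n ≥ 1 and every w > n,
∑_{k=0}^{n} (−1)^k·C(n,k)·c(w−k, 2n+2) = 2^{2n+2}. -/
theorem stmt_8 (n w : ℕ) (hn : 1 ≤ n) (hw : n < w) :
    ∑ k ∈ Finset.range (n + 1),
        (-1 : ℤ) ^ k * n.choose k * c (w - k) (n + 1) = 2 ^ (2 * n + 2) :=
  stmt_8_general n w hw
end

section
/- On the 2-torus with basis functions z[c] for c = (c_1,c_2) ∈ ℤ², where z[c] = s(c_1,x_1)·s(c_2,x_2) with s(a,x) = sin(ax) if a>0 and cos(ax) if a≤0, and with the reduced (top-weight) Poisson bracket, the following holds: for a, b nonzero integers, {z[(−a,0)], z[(0,−b)]} = a·b·z[(a,b)]; consequently every basis element z[(a,b)] with a·b ≠ 0 lies in the image of the bracket. -/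
/-- s(a,x) = sin(ax) if a > 0, cos(ax) if a ≤ 0. -/
noncomputable def s (a : ℤ) (x : ℝ) : ℝ :=
  if 0 < a then Real.sin (a * x) else Real.cos (a * x)

/-- The trigonometric basis function z[(c₁,c₂)] on the 2-torus. -/
noncomputable def z (c₁ c₂ : ℤ) (x y : ℝ) : ℝ := s c₁ x * s c₂ y

/-- The Poisson bracket of two functions on the 2-torus:
{F,G} = ∂₁F·∂₂G − ∂₂F·∂₁G. -/
noncomputable def PB (F G : ℝ → ℝ → ℝ) (x y : ℝ) : ℝ :=
  deriv (fun t => F t y) x * deriv (fun t => G x t) y -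
    deriv (fun t => F x t) y * deriv (fun t => G t y) x

/-! Since `s 0 = 1`, `z[(-a,0)]` depends on `x` alone and `z[(0,-b)]` on `y` alone, so their
bracket is the product of the two derivatives; differentiating `s (-a)` swaps sine and cosine,
`d/dx s(-a, x) = -a · s(a, x)`, which gives `a b z[(a,b)]`. Dividing the second argument by
`a b ≠ 0` then exhibits `z[(a,b)]` as a bracket. -/

lemma s_zero (x : ℝ) : s 0 x = 1 := by simp [s]

lemma z_zero_right (c : ℤ) (x y : ℝ) : z c 0 x y = s c x := by simp [z, s_zero]

lemma z_zero_left (c : ℤ) (x y : ℝ) : z 0 c x y = s c y := by simp [z, s_zero]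

lemma hasDerivAt_s_neg (a : ℤ) (x : ℝ) : HasDerivAt (s (-a)) (-a * s a x) x := by
  rcases lt_trichotomy a 0 with h | rfl | h
  · have hs : s (-a) = fun t => Real.sin (-a * t) := by
      funext t; simp [s, h]
    rw [hs, s, if_neg (by omega)]
    convert ((hasDerivAt_id' x).const_mul (-a : ℝ)).sin using 1
    simp only [neg_mul, Real.cos_neg]
    ring
  · rw [neg_zero, show s 0 = fun _ => 1 from funext s_zero]
    simpa using hasDerivAt_const x (1 : ℝ)
  · have hs : s (-a) = fun t => Real.cos (-a * t) := by
      funext t; simp [s, h.le]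
    rw [hs, s, if_pos h]
    convert ((hasDerivAt_id' x).const_mul (-a : ℝ)).cos using 1
    simp only [neg_mul, Real.sin_neg]
    ring

lemma PB_apply_of_separated (f g : ℝ → ℝ) (x y : ℝ) :
    PB (fun x _ => f x) (fun _ y => g y) x y = deriv f x * deriv g y := by
  simp [PB]

lemma PB_const_mul_right (F G : ℝ → ℝ → ℝ) (c x y : ℝ) :
    PB F (fun x y => c * G x y) x y = c * PB F G x y := by
  simp only [PB, deriv_const_mul_field']
  ring

lemma PB_z_neg_zero_z_zero_neg (a b : ℤ) (x y : ℝ) :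
    PB (z (-a) 0) (z 0 (-b)) x y = (a : ℝ) * b * z a b x y := by
  have hF : z (-a) 0 = fun x _ => s (-a) x := by funext; exact z_zero_right ..
  have hG : z 0 (-b) = fun _ y => s (-b) y := by funext; exact z_zero_left ..
  rw [hF, hG, PB_apply_of_separated, (hasDerivAt_s_neg a x).deriv,
    (hasDerivAt_s_neg b y).deriv, z]
  ring

/-- For nonzero integers a, b: {z[(−a,0)], z[(0,−b)]} = a·b·z[(a,b)]
(here the bracket already is top-weight, so it agrees with the reduced
bracket); consequently z[(a,b)] with a·b ≠ 0 lies in the image of the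
bracket. -/
theorem stmt_15 (a b : ℤ) (ha : a ≠ 0) (hb : b ≠ 0) :
    (∀ x y : ℝ, PB (z (-a) 0) (z 0 (-b)) x y = (a : ℝ) * b * z a b x y) ∧
    ∃ F G : ℝ → ℝ → ℝ, ∀ x y : ℝ, PB F G x y = z a b x y := by
  refine ⟨PB_z_neg_zero_z_zero_neg a b,
    z (-a) 0, fun x y => ((a : ℝ) * b)⁻¹ * z 0 (-b) x y, fun x y => ?_⟩
  have hab : (a : ℝ) * b ≠ 0 := by positivity
  rw [PB_const_mul_right, PB_z_neg_zero_z_zero_neg, inv_mul_cancel_left₀ hab]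
end
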